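/- An up-down word w = w₁w₂⋯w_ℓ over {1,…,k} avoids the vincular pattern 3-12 (no indices j* < j with w_{j} < w_{j+1} < w_{j*}, where w_j, w_{j+1} adjacent) if and only if the top elements of w are weakly increasing. Consequently, an up-down word avoids 3-12 if and only if it avoids the consecutive pattern 312. -/
import Mathlib


/-- `w` is an up-down word: `w₀ < w₁ > w₂ < w₃ > ⋯` (0-indexed). -/
def IsUpDown {l k : ℕ} (w : Fin l → Fin k) : Prop :=
  ∀ j : ℕ, ∀ h : j + 1 < l,
    (j % 2 = 0 → w ⟨j, by omega⟩ < w ⟨j + 1, h⟩) ∧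
    (j % 2 = 1 → w ⟨j + 1, h⟩ < w ⟨j, by omega⟩)

/-- `w` avoids the vincular pattern 3-12: no `a < j` with
`w j < w (j+1) < w a` (the last two letters adjacent). -/
def AvoidsV3_12 {l k : ℕ} (w : Fin l → Fin k) : Prop :=
  ∀ a j : ℕ, ∀ haj : a < j, ∀ h : j + 1 < l,
    ¬ (w ⟨j, by omega⟩ < w ⟨j + 1, h⟩ ∧ w ⟨j + 1, h⟩ < w ⟨a, by omega⟩)

/-- `w` avoids the consecutive pattern 312. -/
def AvoidsC312 {l k : ℕ} (w : Fin l → Fin k) : Prop :=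
  ∀ j : ℕ, ∀ h : j + 2 < l,
    ¬ (w ⟨j + 1, by omega⟩ < w ⟨j + 2, h⟩ ∧ w ⟨j + 2, h⟩ < w ⟨j, by omega⟩)

private lemma wcast {l k : ℕ} (w : Fin l → Fin k) {i j : ℕ} (hi : i < l) (hj : j < l)
    (e : i = j) : w ⟨i, hi⟩ = w ⟨j, hj⟩ := by subst e; rfl

private lemma tops_of_C312 {l k : ℕ} (w : Fin l → Fin k) (hud : IsUpDown w)
    (hC : AvoidsC312 w) :
    ∀ m₁ m₂ : ℕ, ∀ h₁ : 2 * m₁ + 1 < l, ∀ h₂ : 2 * m₂ + 1 < l,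
      m₁ ≤ m₂ → w ⟨2 * m₁ + 1, h₁⟩ ≤ w ⟨2 * m₂ + 1, h₂⟩ := by
  intro m₁ m₂ h₁ h₂ hle
  induction m₂ with
  | zero =>
    have : m₁ = 0 := by omega
    subst this; exact le_refl _
  | succ n ih =>
    rcases Nat.lt_or_ge m₁ (n+1) with hlt | hge
    · have hn : 2 * n + 1 < l := by omega
      have step : w ⟨2 * n + 1, hn⟩ ≤ w ⟨2 * (n+1) + 1, h₂⟩ := by
        by_contra hcon
        push_neg at hcon
        have hmid : (2 * n + 2) % 2 = 0 := by omega
        have hud' := (hud (2 * n + 2) (by omega)).1 hmid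
        refine hC (2 * n + 1) (by omega) ⟨?_, ?_⟩
        · calc w ⟨2*n+1+1, by omega⟩ = w ⟨2*n+2, by omega⟩ := wcast w _ _ (by omega)
            _ < w ⟨2*n+2+1, by omega⟩ := hud'
            _ = w ⟨2*n+1+2, by omega⟩ := wcast w _ _ (by omega)
        · calc w ⟨2*n+1+2, by omega⟩ = w ⟨2*(n+1)+1, h₂⟩ := wcast w _ _ (by omega)
            _ < w ⟨2*n+1, hn⟩ := hcon
      exact le_trans (ih hn (by omega)) step
    · have : m₁ = n + 1 := by omega
      subst this; exact le_refl _

private lemma V_of_tops {l k : ℕ} (w : Fin l → Fin k) (hud : IsUpDown w)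
    (htop : ∀ m₁ m₂ : ℕ, ∀ h₁ : 2 * m₁ + 1 < l, ∀ h₂ : 2 * m₂ + 1 < l,
      m₁ ≤ m₂ → w ⟨2 * m₁ + 1, h₁⟩ ≤ w ⟨2 * m₂ + 1, h₂⟩) :
    AvoidsV3_12 w := by
  intro a j haj h hocc
  obtain ⟨h1, h2⟩ := hocc
  rcases Nat.mod_two_eq_zero_or_one j with hje | hjo
  swap
  · -- j odd: w_{j+1} < w_j, contradicting h1
    have := (hud j h).2 hjo
    exact absurd h1 (not_lt.2 (le_of_lt this))
  · -- j even, j+1 = 2*(j/2)+1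
    have hj2 : j + 1 = 2 * (j / 2) + 1 := by omega
    rcases Nat.mod_two_eq_zero_or_one a with hae | hao
    · -- a even: w_a < w_{a+1}, a+1 odd top ≤ top j+1
      have ha1 : a + 1 < l := by omega
      have hstep := (hud a ha1).1 (by omega)
      have ha2 : a + 1 = 2 * (a / 2) + 1 := by omega
      have hmono : w ⟨a + 1, ha1⟩ ≤ w ⟨j + 1, h⟩ := by
        calc w ⟨a+1, ha1⟩ = w ⟨2 * (a/2) + 1, by omega⟩ := wcast w _ _ ha2
          _ ≤ w ⟨2 * (j/2) + 1, by omega⟩ := htop _ _ _ _ (by omega)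
          _ = w ⟨j+1, h⟩ := wcast w _ _ hj2.symm
      exact absurd (lt_of_lt_of_le hstep hmono) (not_lt.2 (le_of_lt h2))
    · -- a odd top ≤ top j+1
      have ha2 : a = 2 * (a / 2) + 1 := by omega
      have hmono : w ⟨a, by omega⟩ ≤ w ⟨j + 1, h⟩ := by
        calc w ⟨a, by omega⟩ = w ⟨2 * (a/2) + 1, by omega⟩ := wcast w _ _ ha2
          _ ≤ w ⟨2 * (j/2) + 1, by omega⟩ := htop _ _ _ _ (by omega)
          _ = w ⟨j+1, h⟩ := wcast w _ _ hj2.symm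
      exact absurd h2 (not_lt.2 hmono)

private lemma C_of_V {l k : ℕ} (w : Fin l → Fin k) (hV : AvoidsV3_12 w) :
    AvoidsC312 w := by
  intro j h hocc
  refine hV j (j+1) (by omega) (by omega) ⟨?_, ?_⟩
  · calc w ⟨j+1, by omega⟩ < w ⟨j+2, h⟩ := hocc.1
      _ = w ⟨j+1+1, by omega⟩ := wcast w _ _ (by omega)
  · calc w ⟨j+1+1, by omega⟩ = w ⟨j+2, h⟩ := wcast w _ _ (by omega)
      _ < w ⟨j, by omega⟩ := hocc.2

/-- An up-down word avoids the vincular pattern 3-12 iff its top elements are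
weakly increasing; consequently avoiding 3-12 is equivalent to avoiding `⟨312⟩`. -/
theorem stmt_11 (l k : ℕ) (w : Fin l → Fin k) (hud : IsUpDown w) :
    (AvoidsV3_12 w ↔
      (∀ m₁ m₂ : ℕ, ∀ h₁ : 2 * m₁ + 1 < l, ∀ h₂ : 2 * m₂ + 1 < l,
        m₁ ≤ m₂ → w ⟨2 * m₁ + 1, h₁⟩ ≤ w ⟨2 * m₂ + 1, h₂⟩)) ∧
    (AvoidsV3_12 w ↔ AvoidsC312 w) := by
  constructor
  · constructor
    · intro hV
      exact tops_of_C312 w hud (C_of_V w hV)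
    · exact V_of_tops w hud
  · constructor
    · exact C_of_V w
    · intro hC
      exact V_of_tops w hud (tops_of_C312 w hud hC)
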